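/- arXiv:1810.01720 — 11 statements merged into one kernel-verified Lean document; each statement's English description precedes it below -/
import Mathlib

section
/- Let F be differentiable and strictly convex on an interval I ⊆ ℝ, let α_1,…,α_N > 0 with Σ_ν α_ν = 1, let p_1,…,p_N ∈ I, and suppose ĉ ∈ I satisfies F'(ĉ) = Σ_ν α_ν F'(p_ν). Then the multivariate convex conjugate Jensen divergence equals a weighted sum of Bregman divergences with ĉ as the first argument: Σ_ν α_ν [p_ν·F'(p_ν) − F(p_ν)] − [ĉ·F'(ĉ) − F(ĉ)] = Σ_ν α_ν [F(ĉ) − F(p_ν) − F'(p_ν)(ĉ − p_ν)]. -/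
open Finset

/-- The multivariate convex conjugate Jensen divergence equals a weighted sum of Bregman
divergences with `ĉ` as the first argument:
`Σ_ν α_ν F*(F'(p_ν)) − F*(F'(ĉ)) = Σ_ν α_ν B_F(ĉ, p_ν)`,
where `F*(F'(x)) = x·F'(x) − F(x)` and `F'(ĉ) = Σ_ν α_ν F'(p_ν)`. -/
theorem conjugate_jensen_eq_weighted_sum_bregman
    (I : Set ℝ) (F F' : ℝ → ℝ)
    (hF : StrictConvexOn ℝ I F)
    (hF' : ∀ x ∈ I, HasDerivAt F (F' x) x)
    (N : ℕ) (α p : Fin N → ℝ)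
    (hα : ∀ ν, 0 < α ν) (hαsum : ∑ ν, α ν = 1)
    (hp : ∀ ν, p ν ∈ I)
    (chat : ℝ) (hchatI : chat ∈ I)
    (hchat : F' chat = ∑ ν, α ν * F' (p ν)) :
    ∑ ν, α ν * (p ν * F' (p ν) - F (p ν)) - (chat * F' chat - F chat)
      = ∑ ν, α ν * (F chat - F (p ν) - F' (p ν) * (chat - p ν)) := by
  have e1 : ∑ ν, α ν * (p ν * F' (p ν) - F (p ν))
      = (∑ ν, α ν * (p ν * F' (p ν))) - ∑ ν, α ν * F (p ν) := by
    rw [← Finset.sum_sub_distrib]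
    exact Finset.sum_congr rfl fun ν _ => by ring
  have e2 : ∑ ν, α ν * (F chat - F (p ν) - F' (p ν) * (chat - p ν))
      = (∑ ν, α ν) * F chat - (∑ ν, α ν * F (p ν)) - (∑ ν, α ν * F' (p ν)) * chat
        + ∑ ν, α ν * (p ν * F' (p ν)) := by
    rw [Finset.sum_mul, Finset.sum_mul, ← Finset.sum_sub_distrib, ← Finset.sum_sub_distrib,
      ← Finset.sum_add_distrib]
    exact Finset.sum_congr rfl fun ν _ => by ring
  rw [e1, e2, hαsum, hchat]
  ring
end

section
/- Let F be differentiable and strictly convex on an interval I ⊆ ℝ, let α_1,…,α_N > 0 with Σ_ν α_ν = 1, let p_1,…,p_N ∈ I, and suppose ĉ ∈ I satisfies F'(ĉ) = Σ_ν α_ν F'(p_ν). Then the multivariate convex conjugate Jensen divergence J_{F*,α}(p*) = Σ_ν α_ν [p_ν F'(p_ν) − F(p_ν)] − [ĉ F'(ĉ) − F(ĉ)] satisfies J_{F*,α}(p*) ≥ 0, and J_{F*,α}(p*) = 0 if and only if p_1 = p_2 = ⋯ = p_N. -/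
open Finset

/-- Strict tangent line inequality for a strictly convex function. -/
lemma tangent_lt_aux (I : Set ℝ) (F F' : ℝ → ℝ) (hF : StrictConvexOn ℝ I F)
    (hF' : ∀ x ∈ I, HasDerivAt F (F' x) x) {x y : ℝ} (hx : x ∈ I) (hy : y ∈ I)
    (hne : x ≠ y) : F x + F' x * (y - x) < F y := by
  rcases lt_or_gt_of_ne hne with h | h
  · have hs := hF.lt_slope_of_hasDerivAt hx hy h (hF' x hx)
    rw [slope_def_field] at hs
    have h' : (0:ℝ) < y - x := by linarith
    have := (lt_div_iff₀ h').mp hs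
    linarith
  · have hs := hF.slope_lt_of_hasDerivWithinAt_Iio hy hx h (hF' x hx).hasDerivWithinAt
    rw [slope_def_field] at hs
    have hxy : (0:ℝ) < x - y := by linarith
    have := (div_lt_iff₀ hxy).mp hs
    nlinarith

/-- The multivariate convex conjugate Jensen divergence
`J_{F*,α}(p*) = Σ_ν α_ν [p_ν F'(p_ν) − F(p_ν)] − [ĉ F'(ĉ) − F(ĉ)]`, where `ĉ ∈ I` satisfies
`F'(ĉ) = Σ_ν α_ν F'(p_ν)`, is nonnegative and vanishes iff all points `p_ν` coincide. -/
theorem conjugate_jensen_divergence_properties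
    (I : Set ℝ) (F F' : ℝ → ℝ)
    (hF : StrictConvexOn ℝ I F)
    (hF' : ∀ x ∈ I, HasDerivAt F (F' x) x)
    (N : ℕ) (α p : Fin N → ℝ)
    (hα : ∀ ν, 0 < α ν) (hαsum : ∑ ν, α ν = 1)
    (hp : ∀ ν, p ν ∈ I)
    (chat : ℝ) (hchatI : chat ∈ I)
    (hchat : F' chat = ∑ ν, α ν * F' (p ν)) :
    0 ≤ ∑ ν, α ν * (p ν * F' (p ν) - F (p ν)) - (chat * F' chat - F chat) ∧
      (∑ ν, α ν * (p ν * F' (p ν) - F (p ν)) - (chat * F' chat - F chat) = 0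
        ↔ ∀ ν μ, p ν = p μ) := by
  -- rewrite the expression as a sum of termwise gaps
  have hrw : ∑ ν, α ν * (p ν * F' (p ν) - F (p ν)) - (chat * F' chat - F chat)
      = ∑ ν, α ν * ((p ν * F' (p ν) - F (p ν)) - (chat * F' (p ν) - F chat)) := by
    have hsplit : ∑ ν, α ν * ((p ν * F' (p ν) - F (p ν)) - (chat * F' (p ν) - F chat))
        = ∑ ν, α ν * (p ν * F' (p ν) - F (p ν)) - ∑ ν, α ν * (chat * F' (p ν) - F chat) := by
      rw [← Finset.sum_sub_distrib]
      exact Finset.sum_congr rfl fun ν _ => by ring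
    rw [hsplit]
    have h1 : ∑ ν, α ν * (chat * F' (p ν) - F chat)
        = chat * F' chat - F chat := by
      have h2 : ∑ ν, α ν * (chat * F' (p ν) - F chat)
          = chat * (∑ ν, α ν * F' (p ν)) - F chat * (∑ ν, α ν) := by
        rw [Finset.mul_sum, Finset.mul_sum, ← Finset.sum_sub_distrib]
        exact Finset.sum_congr rfl fun ν _ => by ring
      rw [h2, hαsum, mul_one, ← hchat]
    rw [h1]
  -- each gap is nonnegative, strict unless p ν = chat
  have hterm : ∀ ν, p ν ≠ chat →
      0 < (p ν * F' (p ν) - F (p ν)) - (chat * F' (p ν) - F chat) := by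
    intro ν hne
    have := tangent_lt_aux I F F' hF hF' (hp ν) hchatI hne
    nlinarith
  have hterm_le : ∀ ν, 0 ≤ (p ν * F' (p ν) - F (p ν)) - (chat * F' (p ν) - F chat) := by
    intro ν
    by_cases hne : p ν = chat
    · rw [hne]; ring_nf; exact le_refl _
    · exact (hterm ν hne).le
  have hnonneg : 0 ≤ ∑ ν, α ν * ((p ν * F' (p ν) - F (p ν)) - (chat * F' (p ν) - F chat)) :=
    Finset.sum_nonneg fun ν _ => mul_nonneg (hα ν).le (hterm_le ν)
  -- strict monotonicity / injectivity of F' on I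
  have hmono : StrictMonoOn F' I := by
    intro x hx y hy hxy
    calc F' x < slope F x y := hF.lt_slope_of_hasDerivAt hx hy hxy (hF' x hx)
    _ < F' y := hF.slope_lt_of_hasDerivWithinAt_Iio hx hy hxy (hF' y hy).hasDerivWithinAt
  constructor
  · rw [hrw]; exact hnonneg
  · rw [hrw]
    constructor
    · intro h0 ν μ
      have hall : ∀ ν, p ν = chat := by
        intro ν
        by_contra hne
        have hpos : 0 < α ν * ((p ν * F' (p ν) - F (p ν)) - (chat * F' (p ν) - F chat)) :=
          mul_pos (hα ν) (hterm ν hne)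
        have : 0 < ∑ ν, α ν * ((p ν * F' (p ν) - F (p ν)) - (chat * F' (p ν) - F chat)) := by
          apply Finset.sum_pos' (fun ν _ => mul_nonneg (hα ν).le (hterm_le ν))
          exact ⟨ν, Finset.mem_univ ν, hpos⟩
        linarith
      rw [hall ν, hall μ]
    · intro hall
      have hN : Nonempty (Fin N) := by
        by_contra hN
        have : IsEmpty (Fin N) := not_nonempty_iff.mp hN
        rw [Finset.univ_eq_empty, Finset.sum_empty] at hαsum
        exact one_ne_zero hαsum.symm
      obtain ⟨ν₀⟩ := hN
      have hpq : ∀ ν, p ν = p ν₀ := fun ν => hall ν ν₀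
      have hFc : F' chat = F' (p ν₀) := by
        rw [hchat]
        have : ∀ ν, α ν * F' (p ν) = α ν * F' (p ν₀) := fun ν => by rw [hpq ν]
        rw [Finset.sum_congr rfl fun ν _ => this ν, ← Finset.sum_mul, hαsum, one_mul]
      have hceq : chat = p ν₀ := by
        by_contra hne
        rcases lt_or_gt_of_ne hne with h | h
        · exact absurd hFc (hmono hchatI (hp ν₀) h).ne
        · exact absurd hFc.symm (hmono (hp ν₀) hchatI h).ne
      apply Finset.sum_eq_zero
      intro ν _
      rw [hpq ν, ← hceq]
      ring
end

section
/- Let F be differentiable and strictly convex on an interval I ⊆ ℝ, let α_1,…,α_N > 0 with Σ_ν α_ν = 1, let p_1,…,p_N ∈ I, set c = Σ_ν α_ν p_ν ∈ I, and suppose ĉ ∈ I satisfies F'(ĉ) = Σ_ν α_ν F'(p_ν). Then Σ_ν α_ν B_F(c, p_ν) = Σ_ν α_ν B_F(ĉ, p_ν) + B_F(c, ĉ), where B_F(p,q) = F(p) − F(q) − F'(q)(p − q). -/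
open Finset

/-- `Σ_ν α_ν B_F(c, p_ν) = Σ_ν α_ν B_F(ĉ, p_ν) + B_F(c, ĉ)`, where
`B_F(p,q) = F(p) − F(q) − F'(q)(p − q)`, `c = Σ_ν α_ν p_ν` and `F'(ĉ) = Σ_ν α_ν F'(p_ν)`. -/
theorem bregman_sum_comparison
    (I : Set ℝ) (F F' : ℝ → ℝ)
    (hF : StrictConvexOn ℝ I F)
    (hF' : ∀ x ∈ I, HasDerivAt F (F' x) x)
    (N : ℕ) (α p : Fin N → ℝ)
    (hα : ∀ ν, 0 < α ν) (hαsum : ∑ ν, α ν = 1)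
    (hp : ∀ ν, p ν ∈ I)
    (c : ℝ) (hc : c = ∑ ν, α ν * p ν) (hcI : c ∈ I)
    (chat : ℝ) (hchatI : chat ∈ I)
    (hchat : F' chat = ∑ ν, α ν * F' (p ν)) :
    ∑ ν, α ν * (F c - F (p ν) - F' (p ν) * (c - p ν))
      = ∑ ν, α ν * (F chat - F (p ν) - F' (p ν) * (chat - p ν))
        + (F c - F chat - F' chat * (c - chat)) := by
  have expand : ∀ x : ℝ, ∑ ν, α ν * (F x - F (p ν) - F' (p ν) * (x - p ν))
      = F x - ∑ ν, α ν * F (p ν) - (F' chat * x - ∑ ν, α ν * (F' (p ν) * p ν)) := by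
    intro x
    have h1 : ∑ ν, α ν * (F x - F (p ν) - F' (p ν) * (x - p ν))
        = (∑ ν, α ν) * F x - ∑ ν, α ν * F (p ν)
          - ((∑ ν, α ν * F' (p ν)) * x - ∑ ν, α ν * (F' (p ν) * p ν)) := by
      rw [Finset.sum_mul, Finset.sum_mul, ← Finset.sum_sub_distrib, ← Finset.sum_sub_distrib,
        ← Finset.sum_sub_distrib]
      apply Finset.sum_congr rfl
      intro ν _
      ring
    rw [h1, hαsum, ← hchat, one_mul]
  rw [expand c, expand chat]
  ring
end

section
/- (Basic sum decomposition theorem) Let F be differentiable and strictly convex on an interval I ⊆ ℝ, let α_1,…,α_N > 0 with Σ_ν α_ν = 1, let p_1,…,p_N ∈ I, set c = Σ_ν α_ν p_ν ∈ I, and suppose ĉ ∈ I satisfies F'(ĉ) = Σ_ν α_ν F'(p_ν). Then the weighted sum of symmetric Bregman divergences decomposes into three divergences: Σ_ν α_ν (F'(p_ν) − F'(c))(p_ν − c) = J_{F,α}(p) + J_{F*,α}(p*) + B_F(c, ĉ), where J_{F,α}(p) = Σ_ν α_ν F(p_ν) − F(c), J_{F*,α}(p*) = Σ_ν α_ν [p_ν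 F'(p_ν) − F(p_ν)] − [ĉ F'(ĉ) − F(ĉ)], and B_F(c, ĉ) = F(c) − F(ĉ) − F'(ĉ)(c − ĉ). -/
open Finset

/-- (Basic sum decomposition theorem) The weighted sum of 1-dimensional symmetric Bregman
divergences decomposes into three divergences:
`Σ_ν α_ν B_{F,sym}(p_ν, c) = J_{F,α}(p) + J_{F*,α}(p*) + B_F(c, ĉ)`,
where `B_{F,sym}(p,q) = (F'(p) − F'(q))(p − q)`, `c = Σ_ν α_ν p_ν`,
`F'(ĉ) = Σ_ν α_ν F'(p_ν)`, `J_{F,α}(p) = Σ_ν α_ν F(p_ν) − F(c)` and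
`J_{F*,α}(p*) = Σ_ν α_ν [p_ν F'(p_ν) − F(p_ν)] − [ĉ F'(ĉ) − F(ĉ)]`. -/
theorem basic_sum_decomposition
    (I : Set ℝ) (F F' : ℝ → ℝ)
    (hF : StrictConvexOn ℝ I F)
    (hF' : ∀ x ∈ I, HasDerivAt F (F' x) x)
    (N : ℕ) (α p : Fin N → ℝ)
    (hα : ∀ ν, 0 < α ν) (hαsum : ∑ ν, α ν = 1)
    (hp : ∀ ν, p ν ∈ I)
    (c : ℝ) (hc : c = ∑ ν, α ν * p ν) (hcI : c ∈ I)
    (chat : ℝ) (hchatI : chat ∈ I)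
    (hchat : F' chat = ∑ ν, α ν * F' (p ν)) :
    ∑ ν, α ν * ((F' (p ν) - F' c) * (p ν - c))
      = (∑ ν, α ν * F (p ν) - F c)
        + (∑ ν, α ν * (p ν * F' (p ν) - F (p ν)) - (chat * F' chat - F chat))
        + (F c - F chat - F' chat * (c - chat)) := by
  have key : ∀ ν, α ν * ((F' (p ν) - F' c) * (p ν - c))
      = α ν * (p ν * F' (p ν)) - c * (α ν * F' (p ν)) - F' c * (α ν * p ν)
        + (F' c * c) * α ν := by intro ν; ring
  have key2 : ∀ ν, α ν * (p ν * F' (p ν) - F (p ν))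
      = α ν * (p ν * F' (p ν)) - α ν * F (p ν) := by intro ν; ring
  simp only [key, key2, Finset.sum_add_distrib, Finset.sum_sub_distrib,
    ← Finset.mul_sum, ← Finset.sum_mul, ← hchat, ← hc, hαsum]
  ring
end

section
/- (Sum decomposition theorem 1) Let F be differentiable and strictly convex on an interval I ⊆ ℝ, let α ∈ (0,1), let p_1,…,p_M, q_1,…,q_M ∈ I, set c_i = α p_i + (1−α) q_i ∈ I, and suppose for each i there is ĉ_i ∈ I with F'(ĉ_i) = α F'(p_i) + (1−α) F'(q_i). Then α(1−α) B_{F,sym}(P,Q) = J_{F,α}(P,Q) + J_{F*,α}(P*,Q*) + B_F(C,Ĉ), i.e. α(1−α) Σ_i (F'(p_i) − F'(q_i))(p_i − q_i) = Σ_i [α F(p_i) + (1−α) F(q_i) − F(c_i)] + Σ_i [α (p_i F'(p_i) − F(p_i)) + (1−α)(q_i F'(q_i) − F(q_i)) − (ĉ_i F'(ĉ_i) − F(ĉ_i))] + Σ_i [F(c_i) − F(ĉ_i) − F'(ĉ_i)(c_i − ĉ_i)]. -/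
open Finset

/-- (Sum decomposition theorem 1) The symmetric Bregman divergence decomposes as
`α(1−α) B_{F,sym}(P,Q) = J_{F,α}(P,Q) + J_{F*,α}(P*,Q*) + B_F(C,Ĉ)`,
where `c_i = α p_i + (1−α) q_i` and `F'(ĉ_i) = α F'(p_i) + (1−α) F'(q_i)`. -/
theorem sum_decomposition_theorem_1
    (I : Set ℝ) (F F' : ℝ → ℝ)
    (hF : StrictConvexOn ℝ I F)
    (hF' : ∀ x ∈ I, HasDerivAt F (F' x) x)
    (α : ℝ) (hα : α ∈ Set.Ioo (0 : ℝ) 1)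
    (M : ℕ) (p q : Fin M → ℝ)
    (hp : ∀ i, p i ∈ I) (hq : ∀ i, q i ∈ I)
    (c : Fin M → ℝ) (hc : ∀ i, c i = α * p i + (1 - α) * q i) (hcI : ∀ i, c i ∈ I)
    (chat : Fin M → ℝ) (hchatI : ∀ i, chat i ∈ I)
    (hchat : ∀ i, F' (chat i) = α * F' (p i) + (1 - α) * F' (q i)) :
    α * (1 - α) * ∑ i, (F' (p i) - F' (q i)) * (p i - q i)
      = (∑ i, (α * F (p i) + (1 - α) * F (q i) - F (c i)))
        + (∑ i, (α * (p i * F' (p i) - F (p i)) + (1 - α) * (q i * F' (q i) - F (q i))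
            - (chat i * F' (chat i) - F (chat i))))
        + (∑ i, (F (c i) - F (chat i) - F' (chat i) * (c i - chat i))) := by
  rw [Finset.mul_sum, ← Finset.sum_add_distrib, ← Finset.sum_add_distrib]
  refine Finset.sum_congr rfl fun i _ => ?_
  rw [hc i, hchat i]
  ring
end

section
/- Let F be differentiable and strictly convex on an interval I ⊆ ℝ, let α ∈ (0,1), let p_1,…,p_M, q_1,…,q_M ∈ I, set c_i = α p_i + (1−α) q_i ∈ I, and suppose for each i there is ĉ_i ∈ I with F'(ĉ_i) = α F'(p_i) + (1−α) F'(q_i). Then all three of the following inequalities hold: α(1−α) B_{F,sym}(P,Q) ≥ J_{F,α}(P,Q), α(1−α) B_{F,sym}(P,Q) ≥ J_{F*,α}(P*,Q*), and α(1−α) B_{F,sym}(P,Q) ≥ B_F(C,Ĉ). -/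
open Finset

/-- Bregman divergence nonnegativity: tangent line lies below a convex function. -/
lemma breg_nonneg {I : Set ℝ} {F F' : ℝ → ℝ}
    (hF : ConvexOn ℝ I F) (hF' : ∀ x ∈ I, HasDerivAt F (F' x) x)
    {x y : ℝ} (hx : x ∈ I) (hy : y ∈ I) :
    0 ≤ F x - F y - F' y * (x - y) := by
  rcases lt_trichotomy x y with h | h | h
  · have := hF.slope_le_of_hasDerivAt hx hy h (hF' y hy)
    rw [slope_def_field] at this
    have hd : 0 < y - x := by linarith
    rw [div_le_iff₀ hd] at this
    nlinarith
  · simp [h]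
  · have := hF.le_slope_of_hasDerivAt hy hx h (hF' y hy)
    rw [slope_def_field] at this
    have hd : 0 < x - y := by linarith
    rw [le_div_iff₀ hd] at this
    nlinarith

/-- All three inequalities: `α(1−α) B_{F,sym}(P,Q) ≥ J_{F,α}(P,Q)`,
`α(1−α) B_{F,sym}(P,Q) ≥ J_{F*,α}(P*,Q*)`, and `α(1−α) B_{F,sym}(P,Q) ≥ B_F(C,Ĉ)`. -/
theorem sum_decomposition_inequalities
    (I : Set ℝ) (F F' : ℝ → ℝ)
    (hF : StrictConvexOn ℝ I F)
    (hF' : ∀ x ∈ I, HasDerivAt F (F' x) x)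
    (α : ℝ) (hα : α ∈ Set.Ioo (0 : ℝ) 1)
    (M : ℕ) (p q : Fin M → ℝ)
    (hp : ∀ i, p i ∈ I) (hq : ∀ i, q i ∈ I)
    (c : Fin M → ℝ) (hc : ∀ i, c i = α * p i + (1 - α) * q i) (hcI : ∀ i, c i ∈ I)
    (chat : Fin M → ℝ) (hchatI : ∀ i, chat i ∈ I)
    (hchat : ∀ i, F' (chat i) = α * F' (p i) + (1 - α) * F' (q i)) :
    (∑ i, (α * F (p i) + (1 - α) * F (q i) - F (c i)))
        ≤ α * (1 - α) * ∑ i, (F' (p i) - F' (q i)) * (p i - q i) ∧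
    (∑ i, (α * (p i * F' (p i) - F (p i)) + (1 - α) * (q i * F' (q i) - F (q i))
        - (chat i * F' (chat i) - F (chat i))))
        ≤ α * (1 - α) * ∑ i, (F' (p i) - F' (q i)) * (p i - q i) ∧
    (∑ i, (F (c i) - F (chat i) - F' (chat i) * (c i - chat i)))
        ≤ α * (1 - α) * ∑ i, (F' (p i) - F' (q i)) * (p i - q i) := by
  obtain ⟨hα0, hα1⟩ := hα
  have hα1' : (0:ℝ) < 1 - α := by linarith
  have hFc := hF.convexOn
  have B := fun {x y : ℝ} (hx : x ∈ I) (hy : y ∈ I) => breg_nonneg hFc hF' hx hy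
  refine ⟨?_, ?_, ?_⟩ <;>
  · rw [mul_sum]
    apply Finset.sum_le_sum
    intro i _
    have Bcp := B (hcI i) (hp i)
    have Bcq := B (hcI i) (hq i)
    have Bpc := B (hp i) (hcI i)
    have Bqc := B (hq i) (hcI i)
    have Bcch := B (hcI i) (hchatI i)
    have Bchp := B (hchatI i) (hp i)
    have Bchq := B (hchatI i) (hq i)
    rw [hc i] at Bcp Bcq Bpc Bqc Bcch
    rw [hchat i] at Bcch
    simp only [hc i, hchat i]
    nlinarith [mul_nonneg hα0.le Bcp, mul_nonneg hα1'.le Bcq,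
      mul_nonneg hα0.le Bpc, mul_nonneg hα1'.le Bqc,
      mul_nonneg hα0.le Bchp, mul_nonneg hα1'.le Bchq, Bcch]
end

section
/- Let α ∈ (0,1) and let p_1,…,p_M and q_1,…,q_M be positive reals. Then α(1−α)·J(P,Q) = JS_α(P‖Q) + α(1−α)·D_α(P‖Q) + KL(αP+(1−α)Q ‖ P^α Q^{1−α}), where J is the Jeffreys divergence, JS_α the skew Jensen-Shannon divergence, D_α Amari's alpha-divergence, and the last term is the extended Kullback-Leibler divergence between the arithmetic mixture αp_i+(1−α)q_i and the geometric mixture p_i^α q_i^{1−α}. -/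
open Finset Real

/-- `α(1−α)·J(P,Q) = JS_α(P‖Q) + α(1−α)·D_α(P‖Q) + KL(αP+(1−α)Q ‖ P^α Q^{1−α})`,
where `J` is the Jeffreys divergence, `JS_α` the skew Jensen-Shannon divergence,
`D_α` Amari's alpha-divergence, and the last term is the extended Kullback-Leibler
divergence between the arithmetic and geometric mixtures. -/
theorem jeffreys_decomposition_skew
    (α : ℝ) (hα : α ∈ Set.Ioo (0 : ℝ) 1)
    (M : ℕ) (p q : Fin M → ℝ)
    (hp : ∀ i, 0 < p i) (hq : ∀ i, 0 < q i)
    (c : Fin M → ℝ) (hc : ∀ i, c i = α * p i + (1 - α) * q i) :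
    α * (1 - α) * ∑ i, (p i - q i) * Real.log (p i / q i)
      = (α * ∑ i, (-(p i) + c i + p i * Real.log (p i / c i))
          + (1 - α) * ∑ i, (-(q i) + c i + q i * Real.log (q i / c i)))
        + α * (1 - α) * ((1 / (α * (α - 1)))
            * ((∑ i, p i ^ α * q i ^ (1 - α)) - α * ∑ i, p i - (1 - α) * ∑ i, q i))
        + ∑ i, (-(c i) + p i ^ α * q i ^ (1 - α)
            + c i * Real.log (c i / (p i ^ α * q i ^ (1 - α)))) := by
  obtain ⟨hα0, hα1⟩ := hα
  have hαne : α ≠ 0 := ne_of_gt hα0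
  have hα1ne : α - 1 ≠ 0 := by linarith
  have hK : α * (1 - α) * ((1 / (α * (α - 1)))
        * ((∑ i, p i ^ α * q i ^ (1 - α)) - α * ∑ i, p i - (1 - α) * ∑ i, q i))
      = ∑ i, (α * p i + (1 - α) * q i - p i ^ α * q i ^ (1 - α)) := by
    simp only [Finset.sum_add_distrib, Finset.sum_sub_distrib, ← Finset.mul_sum]
    field_simp; ring
  rw [hK]
  simp only [mul_sub, Finset.mul_sum, ← Finset.sum_add_distrib, ← Finset.sum_sub_distrib]
  refine Finset.sum_congr rfl fun i _ => ?_
  have hpi := hp i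
  have hqi := hq i
  have hci : 0 < c i := by rw [hc i]; exact add_pos (mul_pos hα0 hpi) (mul_pos (by linarith) hqi)
  have hg : 0 < p i ^ α * q i ^ (1 - α) := by positivity
  have l1 : Real.log (p i / q i) = Real.log (p i) - Real.log (q i) :=
    Real.log_div hpi.ne' hqi.ne'
  have l2 : Real.log (p i / c i) = Real.log (p i) - Real.log (c i) :=
    Real.log_div hpi.ne' hci.ne'
  have l3 : Real.log (q i / c i) = Real.log (q i) - Real.log (c i) :=
    Real.log_div hqi.ne' hci.ne'
  have l4 : Real.log (c i / (p i ^ α * q i ^ (1 - α)))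
      = Real.log (c i) - (α * Real.log (p i) + (1 - α) * Real.log (q i)) := by
    rw [Real.log_div hci.ne' hg.ne', Real.log_mul (by positivity) (by positivity),
      Real.log_rpow hpi, Real.log_rpow hqi]
  rw [l1, l2, l3, l4, hc i]
  field_simp
  ring
end

section
/- Let p_1,…,p_M and q_1,…,q_M be positive reals. Then (1/4)·J(P,Q) = JS(P,Q) + H²(P,Q) + KL((P+Q)/2 ‖ √(PQ)), where J is the Jeffreys divergence, JS the Jensen-Shannon divergence, H² the squared Hellinger distance, and the last term is the extended Kullback-Leibler divergence between the arithmetic mean (p_i+q_i)/2 and the geometric mean √(p_i q_i). -/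
open Finset Real

/-- `(1/4)·J(P,Q) = JS(P,Q) + H²(P,Q) + KL((P+Q)/2 ‖ √(PQ))`, where `J` is the Jeffreys
divergence, `JS` the Jensen-Shannon divergence, `H²` the squared Hellinger distance, and
the last term is the extended Kullback-Leibler divergence between the arithmetic mean
`(p_i+q_i)/2` and the geometric mean `√(p_i q_i)`. -/
theorem jeffreys_decomposition
    (M : ℕ) (p q : Fin M → ℝ)
    (hp : ∀ i, 0 < p i) (hq : ∀ i, 0 < q i)
    (m : Fin M → ℝ) (hm : ∀ i, m i = (p i + q i) / 2) :
    (1 / 4) * ∑ i, (p i - q i) * Real.log (p i / q i)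
      = ((1 / 2) * ∑ i, (-(p i) + m i + p i * Real.log (p i / m i))
          + (1 / 2) * ∑ i, (-(q i) + m i + q i * Real.log (q i / m i)))
        + (1 / 2) * ∑ i, (Real.sqrt (p i) - Real.sqrt (q i)) ^ 2
        + ∑ i, (-(m i) + Real.sqrt (p i * q i)
            + m i * Real.log (m i / Real.sqrt (p i * q i))) := by
  rw [Finset.mul_sum, Finset.mul_sum, Finset.mul_sum, Finset.mul_sum,
    ← Finset.sum_add_distrib, ← Finset.sum_add_distrib, ← Finset.sum_add_distrib]
  refine Finset.sum_congr rfl fun i _ => ?_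
  have hpi := hp i
  have hqi := hq i
  have hmi : (0:ℝ) < m i := by rw [hm i]; positivity
  have hpq : (0:ℝ) < p i * q i := by positivity
  have hsp : Real.sqrt (p i) ^ 2 = p i := Real.sq_sqrt hpi.le
  have hsq : Real.sqrt (q i) ^ 2 = q i := Real.sq_sqrt hqi.le
  have hspq : Real.sqrt (p i * q i) = Real.sqrt (p i) * Real.sqrt (q i) :=
    Real.sqrt_mul hpi.le _
  rw [Real.log_div hpi.ne' hqi.ne', Real.log_div hpi.ne' hmi.ne',
    Real.log_div hqi.ne' hmi.ne',
    Real.log_div hmi.ne' (Real.sqrt_ne_zero'.mpr hpq),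
    Real.log_sqrt hpq.le, Real.log_mul hpi.ne' hqi.ne', hm i, hspq]
  have hlm : Real.log ((p i + q i) / 2) = Real.log ((p i + q i) / 2) := rfl
  nlinarith [sq_nonneg (Real.sqrt (p i) - Real.sqrt (q i)), hsp, hsq]
end

section
/- (Lin's inequality) Let p_1,…,p_M and q_1,…,q_M be positive reals. Then (1/4)·J(P,Q) ≥ JS(P,Q), i.e., one quarter of the Jeffreys divergence is at least the Jensen-Shannon divergence. -/
open Finset Real

lemma lin_pointwise (a b : ℝ) (ha : 0 < a) (hb : 0 < b) :
    (1 / 2) * (-a + (a + b) / 2 + a * Real.log (a / ((a + b) / 2)))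
      + (1 / 2) * (-b + (a + b) / 2 + b * Real.log (b / ((a + b) / 2)))
      ≤ (1 / 4) * ((a - b) * Real.log (a / b)) := by
  have hm : (0:ℝ) < (a + b) / 2 := by linarith
  have hsqrt : Real.sqrt (a * b) ≤ (a + b) / 2 := by
    nlinarith [sq_nonneg (Real.sqrt a - Real.sqrt b), Real.sq_sqrt ha.le,
      Real.sq_sqrt hb.le, Real.sqrt_mul_self ha.le,
      Real.sqrt_mul ha.le b, Real.sqrt_nonneg a, Real.sqrt_nonneg b]
  have hlm : (Real.log a + Real.log b) / 2 ≤ Real.log ((a + b) / 2) := by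
    have h1 : Real.log (Real.sqrt (a * b)) ≤ Real.log ((a + b) / 2) :=
      Real.log_le_log (Real.sqrt_pos.mpr (mul_pos ha hb)) hsqrt
    rwa [Real.log_sqrt (mul_pos ha hb).le, Real.log_mul ha.ne' hb.ne'] at h1
  rw [Real.log_div ha.ne' hm.ne', Real.log_div hb.ne' hm.ne',
      Real.log_div ha.ne' hb.ne']
  nlinarith [mul_le_mul_of_nonneg_left hlm (by linarith : (0:ℝ) ≤ a + b)]

/-- (Lin's inequality) One quarter of the Jeffreys divergence is at least the
Jensen-Shannon divergence: `(1/4)·J(P,Q) ≥ JS(P,Q)`. -/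
theorem lin_inequality
    (M : ℕ) (p q : Fin M → ℝ)
    (hp : ∀ i, 0 < p i) (hq : ∀ i, 0 < q i)
    (m : Fin M → ℝ) (hm : ∀ i, m i = (p i + q i) / 2) :
    (1 / 2) * ∑ i, (-(p i) + m i + p i * Real.log (p i / m i))
      + (1 / 2) * ∑ i, (-(q i) + m i + q i * Real.log (q i / m i))
      ≤ (1 / 4) * ∑ i, (p i - q i) * Real.log (p i / q i) := by
  rw [Finset.mul_sum, Finset.mul_sum, Finset.mul_sum, ← Finset.sum_add_distrib]
  apply Finset.sum_le_sum
  intro i _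
  rw [hm i]
  exact lin_pointwise (p i) (q i) (hp i) (hq i)
end

section
/- (Sum decomposition theorem 2) Let F be differentiable and strictly convex on the positive reals with 1 in its domain, let p_1,…,p_M and q_1,…,q_M be positive reals with each p_i/q_i in the domain of F and Σ_i p_i = Σ_i q_i = S > 0, and suppose ĉ in the domain of F satisfies F'(ĉ) = (1/S) Σ_i q_i F'(p_i/q_i). Then (1/S) Σ_i F'(p_i/q_i)(p_i − q_i) = D_F(P,Q) + D̂_F(P,Q) + B_F(1, ĉ), where D_F(P,Q) = (1/S) Σ_i q_i F(p_i/q_i) − F(1), D̂_F(P,Q) = (1/S) Σ_i q_i [(p_i/q_i) F'(p_i/q_i) − F(p_i/q_i)] − [ĉ F'(ĉ) − F(ĉ)], and B_F(1,ĉ) = F(1) − F(ĉ) − F'(ĉ)(1 − ĉ). -/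
open Finset

/-- (Sum decomposition theorem 2)
`(1/S) Σ_i F'(p_i/q_i)(p_i − q_i) = D_F(P,Q) + D̂_F(P,Q) + B_F(1, ĉ)`, where
`D_F(P,Q) = (1/S) Σ_i q_i F(p_i/q_i) − F(1)`,
`D̂_F(P,Q) = (1/S) Σ_i q_i [(p_i/q_i) F'(p_i/q_i) − F(p_i/q_i)] − [ĉ F'(ĉ) − F(ĉ)]`,
`B_F(1,ĉ) = F(1) − F(ĉ) − F'(ĉ)(1 − ĉ)`, `F'(ĉ) = (1/S) Σ_i q_i F'(p_i/q_i)`, and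
`Σ_i p_i = Σ_i q_i = S > 0`. -/
theorem sum_decomposition_theorem_2
    (D : Set ℝ) (hD : D ⊆ Set.Ioi (0 : ℝ)) (F F' : ℝ → ℝ)
    (hF : StrictConvexOn ℝ D F)
    (hF' : ∀ x ∈ D, HasDerivAt F (F' x) x)
    (h1 : (1 : ℝ) ∈ D)
    (M : ℕ) (p q : Fin M → ℝ)
    (hp : ∀ i, 0 < p i) (hq : ∀ i, 0 < q i)
    (hr : ∀ i, p i / q i ∈ D)
    (S : ℝ) (hS : S = ∑ i, q i) (hS0 : 0 < S)
    (hpq : ∑ i, p i = ∑ i, q i)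
    (chat : ℝ) (hchatD : chat ∈ D)
    (hchat : F' chat = (1 / S) * ∑ i, q i * F' (p i / q i)) :
    (1 / S) * ∑ i, F' (p i / q i) * (p i - q i)
      = ((1 / S) * (∑ i, q i * F (p i / q i)) - F 1)
        + ((1 / S) * (∑ i, q i * ((p i / q i) * F' (p i / q i) - F (p i / q i)))
            - (chat * F' chat - F chat))
        + (F 1 - F chat - F' chat * (1 - chat)) := by
  have h : ∑ i, F' (p i / q i) * (p i - q i)
      = (∑ i, q i * ((p i / q i) * F' (p i / q i) - F (p i / q i))
          + ∑ i, q i * F (p i / q i)) - ∑ i, q i * F' (p i / q i) := by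
    rw [← Finset.sum_add_distrib, ← Finset.sum_sub_distrib]
    apply Finset.sum_congr rfl
    intro i _
    have hqi := (hq i).ne'
    field_simp
    ring
  rw [h, hchat]
  ring
end

section
/- Let F be differentiable and strictly convex on the positive reals with 1 in its domain, let p_1,…,p_M and q_1,…,q_M be positive reals with each p_i/q_i in the domain of F and Σ_i p_i = Σ_i q_i = S > 0, and suppose ĉ in the domain of F satisfies F'(ĉ) = (1/S) Σ_i q_i F'(p_i/q_i). Then all three inequalities hold: (1/S) Σ_i F'(p_i/q_i)(p_i − q_i) ≥ D_F(P,Q), (1/S) Σ_i F'(p_i/q_i)(p_i − q_i) ≥ D̂_F(P,Q), and (1/S) Σ_i F'(p_i/q_i)(p_i − q_i) ≥ B_F(1,ĉ). -/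
open Finset

/-- Gradient inequality for a convex differentiable function on `ℝ`. -/
lemma grad_ineq {D : Set ℝ} {F F' : ℝ → ℝ} (hF : ConvexOn ℝ D F)
    (hF' : ∀ x ∈ D, HasDerivAt F (F' x) x) {x y : ℝ} (hx : x ∈ D) (hy : y ∈ D) :
    F x + F' x * (y - x) ≤ F y := by
  rcases lt_trichotomy x y with h | h | h
  · have := hF.le_slope_of_hasDerivAt hx hy h (hF' x hx)
    rw [slope_def_field] at this
    have hxy : 0 < y - x := by linarith
    rw [le_div_iff₀ hxy] at this
    linarith
  · simp [h]
  · have := hF.slope_le_of_hasDerivAt hy hx h (hF' x hx)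
    rw [slope_def_field] at this
    have hxy : 0 < x - y := by linarith
    rw [div_le_iff₀ hxy] at this
    have h5 : F' x * (y - x) = -(F' x * (x - y)) := by ring
    linarith

/-- All three inequalities: `(1/S) Σ_i F'(p_i/q_i)(p_i − q_i)` dominates `D_F(P,Q)`,
`D̂_F(P,Q)` and `B_F(1,ĉ)`. -/
theorem sum_decomposition_2_inequalities
    (D : Set ℝ) (hD : D ⊆ Set.Ioi (0 : ℝ)) (F F' : ℝ → ℝ)
    (hF : StrictConvexOn ℝ D F)
    (hF' : ∀ x ∈ D, HasDerivAt F (F' x) x)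
    (h1 : (1 : ℝ) ∈ D)
    (M : ℕ) (p q : Fin M → ℝ)
    (hp : ∀ i, 0 < p i) (hq : ∀ i, 0 < q i)
    (hr : ∀ i, p i / q i ∈ D)
    (S : ℝ) (hS : S = ∑ i, q i) (hS0 : 0 < S)
    (hpq : ∑ i, p i = ∑ i, q i)
    (chat : ℝ) (hchatD : chat ∈ D)
    (hchat : F' chat = (1 / S) * ∑ i, q i * F' (p i / q i)) :
    (1 / S) * (∑ i, q i * F (p i / q i)) - F 1
        ≤ (1 / S) * ∑ i, F' (p i / q i) * (p i - q i) ∧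
    (1 / S) * (∑ i, q i * ((p i / q i) * F' (p i / q i) - F (p i / q i)))
        - (chat * F' chat - F chat)
        ≤ (1 / S) * ∑ i, F' (p i / q i) * (p i - q i) ∧
    F 1 - F chat - F' chat * (1 - chat)
        ≤ (1 / S) * ∑ i, F' (p i / q i) * (p i - q i) := by
  have hFc := hF.convexOn
  have grad := fun {x y} hx hy => grad_ineq hFc hF' (x := x) (y := y) hx hy
  have hinv : 0 < 1 / S := by positivity
  have hqr : ∀ i, q i * (p i / q i) = p i := fun i => by
    rw [mul_comm]; exact div_mul_cancel₀ _ (hq i).ne'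
  have hchatS : ∑ i, q i * F' (p i / q i) = S * F' chat := by
    rw [hchat]; field_simp
  have hsumF1 : ∀ c : ℝ, ∑ i, q i * c = S * c := fun c => by
    rw [hS, ← Finset.sum_mul]
  -- (a): Σ q_i F(r_i) ≥ S F(chat) + F'(chat) * (S - S*chat)
  have ha : S * F chat + F' chat * (S - S * chat) ≤ ∑ i, q i * F (p i / q i) := by
    have e : ∀ i, q i * (F chat + F' chat * (p i / q i - chat))
        = F chat * q i + F' chat * p i - F' chat * chat * q i := fun i => by
      linear_combination F' chat * hqr i
    have e1 : S * F chat + F' chat * (S - S * chat)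
        = ∑ i, (F chat * q i + F' chat * p i - F' chat * chat * q i) := by
      rw [Finset.sum_sub_distrib, Finset.sum_add_distrib, ← Finset.mul_sum, ← Finset.mul_sum,
        ← Finset.mul_sum, hpq, ← hS]
      ring
    rw [e1]
    refine Finset.sum_le_sum fun i _ => ?_
    rw [← e i]
    exact mul_le_mul_of_nonneg_left (grad hchatD (hr i)) (hq i).le
  -- (b): Σ q_i F(r_i) ≥ S F(1)
  have hb : S * F 1 ≤ ∑ i, q i * F (p i / q i) := by
    have e : ∀ i, q i * (F 1 + F' 1 * (p i / q i - 1))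
        = F 1 * q i + F' 1 * p i - F' 1 * q i := fun i => by
      linear_combination F' 1 * hqr i
    have e1 : S * F 1 = ∑ i, (F 1 * q i + F' 1 * p i - F' 1 * q i) := by
      rw [Finset.sum_sub_distrib, Finset.sum_add_distrib, ← Finset.mul_sum, ← Finset.mul_sum,
        ← Finset.mul_sum, hpq, ← hS]
      ring
    rw [e1]
    refine Finset.sum_le_sum fun i _ => ?_
    rw [← e i]
    exact mul_le_mul_of_nonneg_left (grad h1 (hr i)) (hq i).le
  -- (c): summed per-i gradient at r_i with y = 1
  have hc : ∑ i, q i * F (p i / q i) - S * F 1 ≤ ∑ i, F' (p i / q i) * (p i - q i) := by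
    have h1' : ∀ i, q i * F (p i / q i) - q i * F 1 ≤ F' (p i / q i) * (p i - q i) := by
      intro i
      have h2 := mul_le_mul_of_nonneg_left (grad (hr i) h1) (hq i).le
      rw [mul_add] at h2
      have h4 : q i * (F' (p i / q i) * (1 - p i / q i)) = F' (p i / q i) * (q i - p i) := by
        linear_combination (-(F' (p i / q i))) * hqr i
      have h5 : F' (p i / q i) * (q i - p i) = -(F' (p i / q i) * (p i - q i)) := by ring
      linarith
    calc ∑ i, q i * F (p i / q i) - S * F 1
        = ∑ i, (q i * F (p i / q i) - q i * F 1) := by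
          rw [Finset.sum_sub_distrib, hsumF1]
      _ ≤ _ := Finset.sum_le_sum fun i _ => h1' i
  -- (d): gradient at r_i with y = chat, summed
  have hd : ∑ i, q i * F (p i / q i) - S * F chat + chat * (S * F' chat)
      ≤ ∑ i, q i * ((p i / q i) * F' (p i / q i)) := by
    have h1' : ∀ i, q i * F (p i / q i) - q i * F chat + chat * (q i * F' (p i / q i))
        ≤ q i * ((p i / q i) * F' (p i / q i)) := by
      intro i
      have h2 := mul_le_mul_of_nonneg_left (grad (hr i) hchatD) (hq i).le
      rw [mul_add] at h2
      have h4 : q i * (F' (p i / q i) * (chat - p i / q i))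
          = chat * (q i * F' (p i / q i)) - q i * ((p i / q i) * F' (p i / q i)) := by ring
      linarith
    calc ∑ i, q i * F (p i / q i) - S * F chat + chat * (S * F' chat)
        = ∑ i, (q i * F (p i / q i) - q i * F chat + chat * (q i * F' (p i / q i))) := by
          rw [Finset.sum_add_distrib, Finset.sum_sub_distrib, hsumF1, ← Finset.mul_sum, hchatS]
      _ ≤ _ := Finset.sum_le_sum fun i _ => h1' i
  -- rewrite target sum
  have hT : ∑ i, F' (p i / q i) * (p i - q i)
      = ∑ i, q i * ((p i / q i) * F' (p i / q i)) - S * F' chat := by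
    rw [← hchatS, ← Finset.sum_sub_distrib]
    refine Finset.sum_congr rfl fun i _ => ?_
    linear_combination (-(F' (p i / q i))) * hqr i
  refine ⟨?_, ?_, ?_⟩
  · -- first inequality, from hc
    have e : (1 / S) * (∑ i, q i * F (p i / q i)) - F 1
        = (1 / S) * (∑ i, q i * F (p i / q i) - S * F 1) := by
      field_simp
    rw [e]
    exact mul_le_mul_of_nonneg_left hc hinv.le
  · -- second inequality, from ha
    have hsplit : ∑ i, q i * ((p i / q i) * F' (p i / q i) - F (p i / q i))
        = ∑ i, q i * ((p i / q i) * F' (p i / q i)) - ∑ i, q i * F (p i / q i) := by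
      rw [← Finset.sum_sub_distrib]
      exact Finset.sum_congr rfl fun i _ => by ring
    have key : (∑ i, q i * ((p i / q i) * F' (p i / q i)))
        - ∑ i, q i * F (p i / q i) - (chat * (S * F' chat) - S * F chat)
        ≤ ∑ i, q i * ((p i / q i) * F' (p i / q i)) - S * F' chat := by
      nlinarith [ha]
    have e : (1 / S) * (∑ i, q i * ((p i / q i) * F' (p i / q i) - F (p i / q i)))
        - (chat * F' chat - F chat)
        = (1 / S) * ((∑ i, q i * ((p i / q i) * F' (p i / q i)))
            - ∑ i, q i * F (p i / q i) - (chat * (S * F' chat) - S * F chat)) := by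
      rw [hsplit]
      field_simp
    rw [e, hT]
    exact mul_le_mul_of_nonneg_left key hinv.le
  · -- third inequality, from hd and hb
    have key : S * (F 1 - F chat - F' chat * (1 - chat))
        ≤ ∑ i, q i * ((p i / q i) * F' (p i / q i)) - S * F' chat := by
      nlinarith [hd, hb]
    have e : F 1 - F chat - F' chat * (1 - chat)
        = (1 / S) * (S * (F 1 - F chat - F' chat * (1 - chat))) := by
      field_simp
    rw [e, hT]
    exact mul_le_mul_of_nonneg_left key hinv.le
end
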